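/- arXiv:2502.02833 — 4 statements merged into one kernel-verified Lean document; each statement's English description precedes it below -/
import Mathlib

section
/- Let m be a positive integer and c > 1 a real number. Then the sequence x_n = (n! · Γ(n·m + c)) / ((n·m)! · Γ(n + c)) is bounded. -/
open Nat

/-- Let `m` be a positive integer and `c > 1` a real number. Then the sequence
`x_n = (n! · Γ(n·m + c)) / ((n·m)! · Γ(n + c))` (for positive integers `n`) is bounded. -/
theorem stmt_0 (m : ℕ) (hm : 0 < m) (c : ℝ) (hc : 1 < c) :
    ∃ C : ℝ, ∀ n : ℕ, 0 < n →
      |(n ! : ℝ) * Real.Gamma (n * m + c) / (((n * m)! : ℝ) * Real.Gamma (n + c))| ≤ C := by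
  have hc0 : 0 < c := by linarith
  have hG : ∀ n : ℕ, Real.Gamma (n + c) = (∏ j ∈ Finset.range n, (c + j)) * Real.Gamma c := by
    intro n
    induction n with
    | zero => simp
    | succ k ih =>
      have h1 : ((k + 1 : ℕ) : ℝ) + c = ((k : ℝ) + c) + 1 := by push_cast; ring
      have h2 : (k : ℝ) + c ≠ 0 := by positivity
      rw [h1, Real.Gamma_add_one h2, ih, Finset.prod_range_succ]
      ring
  have hfact : ∀ k : ℕ, (k ! : ℝ) = ∏ j ∈ Finset.range k, ((j : ℝ) + 1) := by
    intro k
    induction k with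
    | zero => simp
    | succ k ih =>
      rw [Finset.prod_range_succ, ← ih]
      push_cast [Nat.factorial_succ]
      ring
  refine ⟨Real.exp ((c - 1) * (m - 1)), fun n _ => ?_⟩
  have hnm : n ≤ n * m := Nat.le_mul_of_pos_right n hm
  have key : (n ! : ℝ) * Real.Gamma (n * m + c) / (((n * m)! : ℝ) * Real.Gamma (n + c))
      = ∏ j ∈ Finset.Ico n (n * m), (c + j) / ((j : ℝ) + 1) := by
    have hcast : ((n * m : ℕ) : ℝ) + c = ((n * m : ℕ) : ℝ) + c := rfl
    rw [hfact n, hfact (n * m)]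
    have hGnm : Real.Gamma ((n : ℝ) * (m : ℝ) + c)
        = (∏ j ∈ Finset.range (n * m), (c + j)) * Real.Gamma c := by
      have := hG (n * m)
      push_cast at this ⊢
      convert this using 3
    rw [hGnm, hG n]
    rw [← Finset.prod_range_mul_prod_Ico (fun j => c + (j : ℝ)) hnm,
        ← Finset.prod_range_mul_prod_Ico (fun j => (j : ℝ) + 1) hnm,
        Finset.prod_div_distrib]
    have hΓ : Real.Gamma c ≠ 0 := (Real.Gamma_pos_of_pos hc0).ne'
    have h1 : (∏ j ∈ Finset.range n, ((j : ℝ) + 1)) ≠ 0 := by positivity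
    have h2 : (∏ j ∈ Finset.range n, (c + (j : ℝ))) ≠ 0 := by positivity
    have h3 : (∏ j ∈ Finset.Ico n (n * m), ((j : ℝ) + 1)) ≠ 0 := by
      apply Finset.prod_ne_zero_iff.mpr
      intro j _
      positivity
    field_simp
  rw [key, abs_of_nonneg (Finset.prod_nonneg fun j _ => by positivity)]
  have hm1 : (1 : ℝ) ≤ m := by exact_mod_cast hm
  calc ∏ j ∈ Finset.Ico n (n * m), (c + (j : ℝ)) / ((j : ℝ) + 1)
      ≤ ∏ _j ∈ Finset.Ico n (n * m), Real.exp ((c - 1) / ((n : ℝ) + 1)) := by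
        apply Finset.prod_le_prod (fun j _ => by positivity)
        intro j hj
        obtain ⟨hj1, _⟩ := Finset.mem_Ico.mp hj
        have hj1' : (n : ℝ) ≤ j := Nat.cast_le.mpr hj1
        have h : (c + (j : ℝ)) / ((j : ℝ) + 1) = 1 + (c - 1) / ((j : ℝ) + 1) := by
          field_simp
          ring
        rw [h]
        have step1 : (c - 1) / ((j : ℝ) + 1) ≤ (c - 1) / ((n : ℝ) + 1) := by
          gcongr <;> linarith
        have step2 := Real.add_one_le_exp ((c - 1) / ((n : ℝ) + 1))
        linarith
    _ = Real.exp (((n * m - n : ℕ) : ℝ) * ((c - 1) / ((n : ℝ) + 1))) := by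
        rw [Finset.prod_const, ← Real.exp_nat_mul, Nat.card_Ico]
    _ ≤ Real.exp ((c - 1) * ((m : ℝ) - 1)) := by
        apply Real.exp_le_exp.mpr
        have hcast : ((n * m - n : ℕ) : ℝ) = (n : ℝ) * ((m : ℝ) - 1) := by
          rw [Nat.cast_sub hnm]
          push_cast
          ring
        rw [hcast, mul_div_assoc', div_le_iff₀ (by positivity)]
        nlinarith [Nat.cast_nonneg (α := ℝ) n]
end

section
/- Let T be a bounded diagonal operator on a separable Hilbert space with diagonal entries λ_n = π(n+1)/(n+α+2) (with respect to an orthonormal basis), where α > -1. Then the numerical range of T is the half-open interval [π/(α+2), π). -/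
/-!
In the eigenbasis `⟪f, T f⟫ = ∑ λₙ ‖⟪eₙ, f⟫‖²`, a convex combination of the `λₙ` whose weights
sum to `‖f‖² = 1`, at least one of them positive. As `π/(α+2) = λ₀ ≤ λₙ < π`, it lies in
`[λ₀, π)`. Conversely, the unit vectors `√s e₀ + √(1-s) eₙ` realise every point of `[λ₀, λₙ]`,
and `λₙ → π`.
-/

open Set Filter Topology
open scoped InnerProductSpace ComplexConjugate

section DiagonalOperator

variable {𝕜 ι E : Type*} [RCLike 𝕜] [NormedAddCommGroup E] [InnerProductSpace 𝕜 E]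

def numericalRange (T : E →L[𝕜] E) : Set 𝕜 :=
  {z | ∃ f : E, ‖f‖ = 1 ∧ ⟪f, T f⟫_𝕜 = z}

theorem HilbertBasis.inner_apply_of_apply_eq_smul (b : HilbertBasis ι 𝕜 E) {T : E →L[𝕜] E}
    {μ : ι → 𝕜} (hT : ∀ i, T (b i) = μ i • b i) (i : ι) (x : E) :
    ⟪b i, T x⟫_𝕜 = μ i * ⟪b i, x⟫_𝕜 := by
  have h : (innerSL 𝕜 (b i)).comp T = μ i • innerSL 𝕜 (b i) := by
    refine ContinuousLinearMap.ext_on (s := range b) ?_ ?_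
    · simp [Submodule.dense_iff_topologicalClosure_eq_top]
    · rintro _ ⟨n, rfl⟩
      classical
      rcases eq_or_ne n i with rfl | hni
      · simp [hT]
      · simp [hT, orthonormal_iff_ite.mp b.orthonormal, hni.symm]
  simpa using congr($h x)

theorem inner_mul_inner_eq_norm_sq (x y : E) :
    ⟪x, y⟫_𝕜 * ⟪y, x⟫_𝕜 = ((‖⟪y, x⟫_𝕜‖ ^ 2 : ℝ) : 𝕜) := by
  rw [← inner_conj_symm x y, RCLike.conj_mul]
  norm_cast

theorem HilbertBasis.hasSum_norm_inner_sq (b : HilbertBasis ι 𝕜 E) (x : E) :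
    HasSum (fun i => ‖⟪b i, x⟫_𝕜‖ ^ 2) (‖x‖ ^ 2) := by
  have h := b.hasSum_inner_mul_inner x x
  simp only [inner_mul_inner_eq_norm_sq, inner_self_eq_norm_sq_to_K] at h
  exact_mod_cast h

theorem HilbertBasis.hasSum_inner_apply_self_of_apply_eq_smul (b : HilbertBasis ι 𝕜 E)
    {T : E →L[𝕜] E} {μ : ι → ℝ} (hT : ∀ i, T (b i) = (μ i : 𝕜) • b i) (x : E) :
    HasSum (fun i => ((μ i * ‖⟪b i, x⟫_𝕜‖ ^ 2 : ℝ) : 𝕜)) ⟪x, T x⟫_𝕜 := by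
  have h := b.hasSum_inner_mul_inner x (T x)
  simp only [b.inner_apply_of_apply_eq_smul hT, mul_left_comm _ (μ _ : 𝕜),
    inner_mul_inner_eq_norm_sq] at h
  exact_mod_cast h

theorem HasSum.mem_Ico_of_forall_mem_Ico {p μ : ι → ℝ} {a c r : ℝ}
    (hr : HasSum (fun i => μ i * p i) r) (hp : ∀ i, 0 ≤ p i) (hp₁ : HasSum p 1)
    (hμ : ∀ i, μ i ∈ Ico a c) : r ∈ Ico a c := by
  obtain ⟨i, hi⟩ : ∃ i, p i ≠ 0 := by
    by_contra! h
    exact one_ne_zero (hp₁.unique ((funext h : p = 0) ▸ hasSum_zero))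
  constructor
  · simpa using hasSum_le (fun i => mul_le_mul_of_nonneg_right (hμ i).1 (hp i))
      (hp₁.mul_left a) hr
  · simpa using hasSum_lt (fun i => mul_le_mul_of_nonneg_right (hμ i).2.le (hp i))
      (mul_lt_mul_of_pos_right (hμ i).2 ((hp i).lt_of_ne' hi)) hr (hp₁.mul_left c)

theorem HilbertBasis.numericalRange_subset_of_apply_eq_smul (b : HilbertBasis ι 𝕜 E)
    {T : E →L[𝕜] E} {μ : ι → ℝ} (hT : ∀ i, T (b i) = (μ i : 𝕜) • b i) {a c : ℝ}
    (hμ : ∀ i, μ i ∈ Ico a c) : numericalRange T ⊆ (↑) '' Ico a c := by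
  rintro _ ⟨x, hx, rfl⟩
  have hS := b.hasSum_inner_apply_self_of_apply_eq_smul hT x
  obtain ⟨r, hr⟩ := (RCLike.summable_ofReal 𝕜).mp hS.summable
  refine ⟨r, hr.mem_Ico_of_forall_mem_Ico (fun i => sq_nonneg _) ?_ hμ,
    (hS.unique ((RCLike.hasSum_ofReal 𝕜).mpr hr)).symm⟩
  simpa [hx] using b.hasSum_norm_inner_sq x

theorem Orthonormal.inner_smul_add_smul {v : ι → E} (hv : Orthonormal 𝕜 v) {i j : ι} (hij : i ≠ j)
    (a b c d : 𝕜) : ⟪a • v i + b • v j, c • v i + d • v j⟫_𝕜 = conj a * c + conj b * d := by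
  classical
  simp [inner_add_left, inner_add_right, inner_smul_left, inner_smul_right,
    orthonormal_iff_ite.mp hv, hij, hij.symm, hv.1]
  ring

theorem Orthonormal.ofReal_segment_subset_numericalRange {v : ι → E} (hv : Orthonormal 𝕜 v)
    {T : E →L[𝕜] E} {μ : ι → ℝ} (hT : ∀ i, T (v i) = (μ i : 𝕜) • v i) {i j : ι} (hij : i ≠ j) :
    (↑) '' segment ℝ (μ i) (μ j) ⊆ numericalRange T := by
  rintro _ ⟨_, ⟨s, t, hs, ht, hst, rfl⟩, rfl⟩
  set f := (√s : 𝕜) • v i + (√t : 𝕜) • v j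
  have hTf : T f = (√s * μ i : 𝕜) • v i + (√t * μ j : 𝕜) • v j := by
    simp [f, hT, smul_smul, mul_comm]
  have hff : ⟪f, f⟫_𝕜 = 1 := by
    rw [hv.inner_smul_add_smul hij, RCLike.conj_ofReal, RCLike.conj_ofReal]
    exact_mod_cast show √s * √s + √t * √t = 1 by
      rw [Real.mul_self_sqrt hs, Real.mul_self_sqrt ht, hst]
  refine ⟨f, ?_, ?_⟩
  · rw [norm_eq_sqrt_re_inner (𝕜 := 𝕜), hff, RCLike.one_re, Real.sqrt_one]
  · rw [hTf, hv.inner_smul_add_smul hij, RCLike.conj_ofReal, RCLike.conj_ofReal]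
    exact_mod_cast show √s * (√s * μ i) + √t * (√t * μ j) = s * μ i + t * μ j by
      rw [← mul_assoc, ← mul_assoc, Real.mul_self_sqrt hs, Real.mul_self_sqrt ht]

end DiagonalOperator

theorem mul_add_one_div_mem_Ico {c α : ℝ} (hc : 0 < c) (hα : -1 < α) (n : ℕ) :
    c * (n + 1) / (n + α + 2) ∈ Ico (c / (α + 2)) c := by
  have hn : (0 : ℝ) ≤ n := n.cast_nonneg
  constructor
  · rw [div_le_div_iff₀ (by linarith) (by linarith)]
    nlinarith [mul_nonneg (mul_nonneg hc.le hn) (by linarith : (0 : ℝ) ≤ α + 1)]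
  · rw [div_lt_iff₀ (by linarith)]
    nlinarith

theorem tendsto_mul_add_one_div (c α : ℝ) :
    Tendsto (fun n : ℕ => c * (n + 1) / (n + α + 2)) atTop (𝓝 c) := by
  convert tendsto_add_mul_div_add_mul_atTop_nhds c (α + 2) c one_ne_zero using 2 with n
  · ring_nf
  · rw [div_one]

/-- Let `T` be a bounded diagonal operator on a separable complex Hilbert space with
diagonal entries `λ_n = π(n+1)/(n+α+2)` with respect to an orthonormal (Hilbert) basis,
where `α > -1`.  Then the numerical range of `T` is `[π/(α+2), π)`. -/
theorem stmt_4 {H : Type*} [NormedAddCommGroup H] [InnerProductSpace ℂ H] [CompleteSpace H]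
    (α : ℝ) (hα : -1 < α) (e : HilbertBasis ℕ ℂ H) (T : H →L[ℂ] H)
    (hT : ∀ n : ℕ, T (e n) = ((Real.pi * (n + 1) / (n + α + 2) : ℝ) : ℂ) • e n) :
    {z : ℂ | ∃ f : H, ‖f‖ = 1 ∧ (inner ℂ f (T f) : ℂ) = z} =
      Complex.ofReal '' Set.Ico (Real.pi / (α + 2)) Real.pi := by
  set μ : ℕ → ℝ := fun n => Real.pi * (n + 1) / (n + α + 2)
  have hμ : ∀ n, μ n ∈ Ico (Real.pi / (α + 2)) Real.pi :=
    mul_add_one_div_mem_Ico Real.pi_pos hα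
  show numericalRange T = _
  refine (e.numericalRange_subset_of_apply_eq_smul (μ := μ) hT hμ).antisymm ?_
  rintro _ ⟨t, ⟨hμ₀t, htπ⟩, rfl⟩
  obtain ⟨n, htn⟩ : ∃ n, t < μ n :=
    ((tendsto_mul_add_one_div Real.pi α).eventually (eventually_gt_nhds htπ)).exists
  have hμ₀ : μ 0 = Real.pi / (α + 2) := by simp [μ]
  have hn : 0 ≠ n := by
    rintro rfl
    linarith
  exact e.orthonormal.ofReal_segment_subset_numericalRange (μ := μ) hT hn
    ⟨t, Icc_subset_segment ⟨hμ₀ ▸ hμ₀t, htn.le⟩, rfl⟩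
end

section
/- Let T be a rank-one bounded operator on a complex Hilbert space H given by T f = ⟨f, g⟩ h for fixed nonzero vectors g, h ∈ H with g ⊥ h. Then the numerical range of T is the closed disc centred at the origin with radius ‖g‖·‖h‖/2. -/
/-!
Since `g ⊥ h`, `⟪g, f⟫⟪f, h⟫ = ⟪g, ⟪f, h⟫ f - ‖f‖²/2 · h⟫`, and `⟪f, h⟫ f - ‖f‖²/2 · h` is `‖f‖²/2`
times the image of `h` under the reflection `2P - 1` (`P` the projection onto `f`), so it has
norm `‖f‖² ‖h‖/2`; Cauchy–Schwarz bounds the numerical range by the disc. Conversely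
`f = (a/‖g‖) g + (b̄/‖h‖) h` is a unit vector when `|a|² + |b|² = 1` and gives the value
`a b ‖g‖ ‖h‖`; every `w` with `|w| ≤ 1/2` is such a product, with `a = cos θ e^{i arg w}`,
`b = sin θ` and `sin 2θ = 2|w|`.
-/

open RCLike ComplexConjugate

section InnerProductSpace

variable {𝕜 E : Type*} [RCLike 𝕜] [NormedAddCommGroup E] [InnerProductSpace 𝕜 E]

local notation "⟪" x ", " y "⟫" => inner 𝕜 x y

theorem norm_inner_smul_sub_half_smul (f h : E) :
    ‖⟪f, h⟫ • f - ((‖f‖ ^ 2 / 2 : ℝ) : 𝕜) • h‖ = ‖f‖ ^ 2 * ‖h‖ / 2 := by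
  have hsq : ‖⟪f, h⟫ • f - ((‖f‖ ^ 2 / 2 : ℝ) : 𝕜) • h‖ ^ 2 = (‖f‖ ^ 2 * ‖h‖ / 2) ^ 2 := by
    have hre : re (conj ⟪f, h⟫ * (((‖f‖ ^ 2 / 2 : ℝ) : 𝕜) * ⟪f, h⟫)) =
        ‖f‖ ^ 2 / 2 * ‖⟪f, h⟫‖ ^ 2 := by
      rw [mul_left_comm, RCLike.conj_mul, ← RCLike.ofReal_pow, ← RCLike.ofReal_mul,
        RCLike.ofReal_re]
    rw [norm_sub_sq (𝕜 := 𝕜), inner_smul_left, inner_smul_right, hre, norm_smul, norm_smul,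
      RCLike.norm_ofReal, abs_of_nonneg (by positivity)]
    ring
  exact (pow_left_inj₀ (norm_nonneg _) (by positivity) two_ne_zero).mp hsq

theorem norm_inner_mul_inner_le_of_inner_eq_zero {g h : E} (horth : ⟪g, h⟫ = 0) (f : E) :
    ‖⟪g, f⟫ * ⟪f, h⟫‖ ≤ ‖g‖ * ‖h‖ * ‖f‖ ^ 2 / 2 := by
  have key : ⟪g, f⟫ * ⟪f, h⟫ = ⟪g, ⟪f, h⟫ • f - ((‖f‖ ^ 2 / 2 : ℝ) : 𝕜) • h⟫ := by
    rw [inner_sub_right, inner_smul_right, inner_smul_right, horth]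
    ring
  calc ‖⟪g, f⟫ * ⟪f, h⟫‖ ≤ ‖g‖ * ‖⟪f, h⟫ • f - ((‖f‖ ^ 2 / 2 : ℝ) : 𝕜) • h‖ :=
        key ▸ norm_inner_le_norm _ _
    _ = ‖g‖ * ‖h‖ * ‖f‖ ^ 2 / 2 := by rw [norm_inner_smul_sub_half_smul]; ring

theorem exists_norm_eq_one_inner_mul_inner_eq {g h : E} (hg : g ≠ 0) (hh : h ≠ 0)
    (horth : ⟪g, h⟫ = 0) {a b : 𝕜} (hab : ‖a‖ ^ 2 + ‖b‖ ^ 2 = 1) :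
    ∃ f : E, ‖f‖ = 1 ∧ ⟪g, f⟫ * ⟪f, h⟫ = a * b * ((‖g‖ * ‖h‖ : ℝ) : 𝕜) := by
  set f := (a / ‖g‖) • g + (conj b / ‖h‖) • h
  have hgf : ⟪g, f⟫ = a * ‖g‖ := by
    rw [inner_add_right, inner_smul_right, inner_smul_right, inner_self_eq_norm_sq_to_K, horth,
      mul_zero, add_zero]
    field_simp
  have hfh : ⟪f, h⟫ = b * ‖h‖ := by
    rw [inner_add_left, inner_smul_left, inner_smul_left, inner_self_eq_norm_sq_to_K, horth,
      mul_zero, zero_add]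
    simp only [map_div₀, RCLike.conj_conj, RCLike.conj_ofReal]
    field_simp
  refine ⟨f, ?_, by rw [hgf, hfh]; push_cast; ring⟩
  have hsq : ‖f‖ ^ 2 = 1 := by
    rw [norm_add_sq (𝕜 := 𝕜), inner_smul_left, inner_smul_right, horth, mul_zero, mul_zero,
      map_zero, mul_zero, add_zero, norm_smul, norm_smul, norm_div, norm_div,
      RCLike.norm_ofReal, RCLike.norm_ofReal, abs_norm, abs_norm, RCLike.norm_conj,
      div_mul_cancel₀ _ (norm_ne_zero_iff.mpr hg), div_mul_cancel₀ _ (norm_ne_zero_iff.mpr hh),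
      hab]
  exact (pow_eq_one_iff_of_nonneg (norm_nonneg f) two_ne_zero).mp hsq

end InnerProductSpace

theorem Complex.exists_norm_sq_add_norm_sq_eq_one_mul_eq {w : ℂ} (hw : ‖w‖ ≤ 1 / 2) :
    ∃ a b : ℂ, ‖a‖ ^ 2 + ‖b‖ ^ 2 = 1 ∧ a * b = w := by
  set θ := Real.arcsin (2 * ‖w‖) / 2
  refine ⟨Real.cos θ * Complex.exp (Complex.arg w * Complex.I), Real.sin θ, ?_, ?_⟩
  · rw [norm_mul, Complex.norm_exp_ofReal_mul_I, Complex.norm_real, Complex.norm_real,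
      Real.norm_eq_abs, Real.norm_eq_abs, mul_one, sq_abs, sq_abs, Real.cos_sq_add_sin_sq]
  · have hsin : Real.sin θ * Real.cos θ = ‖w‖ := by
      have := Real.sin_two_mul θ
      rw [show 2 * θ = Real.arcsin (2 * ‖w‖) by ring,
        Real.sin_arcsin (by linarith [norm_nonneg w]) (by linarith)] at this
      linarith
    calc (Real.cos θ * Complex.exp (Complex.arg w * Complex.I)) * (Real.sin θ : ℂ)
        = ((Real.sin θ * Real.cos θ : ℝ) : ℂ) * Complex.exp (Complex.arg w * Complex.I) := by
          push_cast; ring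
      _ = w := by rw [hsin, Complex.norm_mul_exp_arg_mul_I]

/-- Let `T` be the rank-one operator `T f = ⟨f, g⟩ h` on a complex Hilbert space,
with `g, h` nonzero and `g ⊥ h`.  (In Mathlib's convention, `⟨f, g⟩ = inner g f`.)
Then the numerical range `{⟨Tf, f⟩ : ‖f‖ = 1}` is the closed disc centred at the
origin with radius `‖g‖·‖h‖/2`. -/
theorem stmt_12 {H : Type*} [NormedAddCommGroup H] [InnerProductSpace ℂ H]
    (g h : H) (hg : g ≠ 0) (hh : h ≠ 0) (horth : (inner ℂ g h : ℂ) = 0) :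
    {z : ℂ | ∃ f : H, ‖f‖ = 1 ∧ (inner ℂ f ((inner ℂ g f : ℂ) • h) : ℂ) = z} =
      Metric.closedBall 0 (‖g‖ * ‖h‖ / 2) := by
  have hgh : 0 < ‖g‖ * ‖h‖ := mul_pos (norm_pos_iff.mpr hg) (norm_pos_iff.mpr hh)
  ext z
  simp only [Set.mem_ofPred_eq, Metric.mem_closedBall, dist_zero_right, inner_smul_right]
  constructor
  · rintro ⟨f, hf, rfl⟩
    simpa [hf] using norm_inner_mul_inner_le_of_inner_eq_zero horth f
  · intro hz
    obtain ⟨a, b, hab, habz⟩ := Complex.exists_norm_sq_add_norm_sq_eq_one_mul_eq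
      (w := z / ((‖g‖ * ‖h‖ : ℝ) : ℂ)) (by
        rw [norm_div, Complex.norm_real, Real.norm_of_nonneg hgh.le, div_le_iff₀ hgh]
        linarith)
    obtain ⟨f, hf, hfz⟩ := exists_norm_eq_one_inner_mul_inner_eq hg hh horth hab
    refine ⟨f, hf, ?_⟩
    rw [hfz, habz]
    exact div_mul_cancel₀ _ (Complex.ofReal_ne_zero.mpr hgh.ne')
end

section
/- The numerical range of the 2×2 complex matrix [[a, 0], [b, d]] with a ≠ d and b ≠ 0 is the closed elliptical disc with foci a and d, minor axis length |b|, and major axis length sqrt(|a - d|² + |b|²). -/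
/-!
Write `z = ⟪x, M x⟫` and `c = a - d`. Since `M - d` and `M - a` have rank one,
`z - d = x₀ (c x̄₀ + b x̄₁)` and `z - a = x̄₁ (b x₀ - c x₁)`, and the two cofactors have total
squared length `(|c|² + |b|²) ‖x‖²`; Cauchy–Schwarz then gives `|z - a| + |z - d| ≤ √(|c|² + |b|²)`.

Conversely `z = d + t c + b w` with `t = |x₀|²`, `w = x₀ x̄₁`, and unit vectors realise every pair
with `t ∈ [0, 1]`, `|w|² = t (1 - t)`. For `z` in the ellipse the intermediate value theorem gives
`t ∈ [0, 1]` with `(1 - t) |z - d|² + t |z - a|² = (|c|² + |b|²) t (1 - t)`, which is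
`|z - d - t c|² = |b|² t (1 - t)`, so `w = (z - d - t c) / b` works.
-/

open Complex ComplexConjugate Set

lemma norm_sub_smul_sq {E : Type*} [NormedAddCommGroup E] [InnerProductSpace ℝ E]
    (u c : E) (t : ℝ) :
    ‖u - t • c‖ ^ 2 = (1 - t) * ‖u‖ ^ 2 + t * ‖u - c‖ ^ 2 - t * (1 - t) * ‖c‖ ^ 2 := by
  rw [norm_sub_sq_real, norm_sub_sq_real, norm_smul, real_inner_smul_right, Real.norm_eq_abs,
    mul_pow, sq_abs]
  ring

lemma mul_add_mul_le_sqrt_mul_sqrt (p q P Q : ℝ) :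
    p * P + q * Q ≤ √(p ^ 2 + q ^ 2) * √(P ^ 2 + Q ^ 2) := by
  simpa [Fin.sum_univ_two] using Real.sum_mul_le_sqrt_mul_sqrt Finset.univ ![p, q] ![P, Q]

lemma norm_sq_conj_add_norm_sq_sub (c b y₀ y₁ : ℂ) :
    ‖c * conj y₀ + b * conj y₁‖ ^ 2 + ‖b * y₀ - c * y₁‖ ^ 2 =
      (‖c‖ ^ 2 + ‖b‖ ^ 2) * (‖y₀‖ ^ 2 + ‖y₁‖ ^ 2) := by
  simp only [Complex.sq_norm, normSq_apply, add_re, add_im, sub_re, sub_im, mul_re, mul_im,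
    conj_re, conj_im]
  ring

lemma exists_mem_Icc_sq_mul_one_sub_add_sq_mul_eq {A B N : ℝ} (hA : 0 ≤ A) (hB : 0 ≤ B)
    (h : (A + B) ^ 2 ≤ N) :
    ∃ t ∈ Icc (0 : ℝ) 1, A ^ 2 * (1 - t) + B ^ 2 * t = N * (t * (1 - t)) := by
  rcases (add_nonneg hA hB).eq_or_lt with hs | hs
  · refine ⟨0, left_mem_Icc.2 zero_le_one, ?_⟩
    have : A = 0 := by linarith
    simp [this]
  set g : ℝ → ℝ := fun t ↦ A ^ 2 * (1 - t) + B ^ 2 * t - N * (t * (1 - t))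
  have ht₀ : A / (A + B) ∈ Icc (0 : ℝ) 1 :=
    ⟨div_nonneg hA hs.le, (div_le_one hs).2 (by linarith)⟩
  have hg₀ : g (A / (A + B)) = A * B * ((A + B) ^ 2 - N) / (A + B) ^ 2 := by
    simp only [g]; field_simp; ring
  have hg : g (A / (A + B)) ≤ 0 := by
    rw [hg₀]
    exact div_nonpos_of_nonpos_of_nonneg
      (mul_nonpos_of_nonneg_of_nonpos (mul_nonneg hA hB) (by linarith)) (sq_nonneg _)
  obtain ⟨t, ht, hgt⟩ := intermediate_value_Icc' ht₀.1 (by fun_prop : Continuous g).continuousOn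
    ⟨hg, by simp [g]; positivity⟩
  exact ⟨t, ⟨ht.1, ht.2.trans ht₀.2⟩, sub_eq_zero.1 hgt⟩

lemma EuclideanSpace.norm_sq_fin_two {𝕜 : Type*} [RCLike 𝕜] (x : EuclideanSpace 𝕜 (Fin 2)) :
    ‖x‖ ^ 2 = ‖x 0‖ ^ 2 + ‖x 1‖ ^ 2 := by
  rw [EuclideanSpace.norm_sq_eq, Fin.sum_univ_two]

section LowerTriangular

variable (a b d : ℂ) {x : EuclideanSpace ℂ (Fin 2)}

lemma inner_toEuclideanLin_lowerTriangular (x : EuclideanSpace ℂ (Fin 2)) :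
    inner ℂ x (Matrix.toEuclideanLin !![a, 0; b, d] x) =
      a * ‖x 0‖ ^ 2 + d * ‖x 1‖ ^ 2 + b * (x 0 * conj (x 1)) := by
  simp only [PiLp.inner_apply, Matrix.ofLp_toLpLin, Matrix.toLin'_apply, Matrix.mulVec,
    dotProduct, Matrix.of_apply, Matrix.cons_val', Matrix.cons_val_fin_one, Fin.sum_univ_two,
    Matrix.cons_val_zero, Matrix.cons_val_one, RCLike.inner_apply, zero_mul, add_zero, ← conj_mul']
  ring

lemma ofReal_norm_sq_add_norm_sq_eq_one (hx : ‖x‖ = 1) : (‖x 0‖ ^ 2 + ‖x 1‖ ^ 2 : ℂ) = 1 := by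
  exact_mod_cast (EuclideanSpace.norm_sq_fin_two x).symm.trans (by rw [hx, one_pow])

lemma inner_toEuclideanLin_lowerTriangular_sub_right (hx : ‖x‖ = 1) :
    inner ℂ x (Matrix.toEuclideanLin !![a, 0; b, d] x) - d =
      x 0 * ((a - d) * conj (x 0) + b * conj (x 1)) := by
  have h := ofReal_norm_sq_add_norm_sq_eq_one hx
  rw [← conj_mul', ← conj_mul'] at h
  rw [inner_toEuclideanLin_lowerTriangular, ← conj_mul', ← conj_mul']
  linear_combination d * h

lemma inner_toEuclideanLin_lowerTriangular_sub_left (hx : ‖x‖ = 1) :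
    inner ℂ x (Matrix.toEuclideanLin !![a, 0; b, d] x) - a =
      conj (x 1) * (b * x 0 - (a - d) * x 1) := by
  have h := ofReal_norm_sq_add_norm_sq_eq_one hx
  rw [← conj_mul', ← conj_mul'] at h
  rw [inner_toEuclideanLin_lowerTriangular, ← conj_mul', ← conj_mul']
  linear_combination a * h

lemma norm_inner_toEuclideanLin_lowerTriangular_sub_add_le (hx : ‖x‖ = 1) :
    ‖inner ℂ x (Matrix.toEuclideanLin !![a, 0; b, d] x) - a‖ +
        ‖inner ℂ x (Matrix.toEuclideanLin !![a, 0; b, d] x) - d‖ ≤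
      √(‖a - d‖ ^ 2 + ‖b‖ ^ 2) := by
  rw [inner_toEuclideanLin_lowerTriangular_sub_left a b d hx,
    inner_toEuclideanLin_lowerTriangular_sub_right a b d hx, norm_mul, norm_mul, norm_conj]
  calc ‖x 1‖ * ‖b * x 0 - (a - d) * x 1‖ + ‖x 0‖ * ‖(a - d) * conj (x 0) + b * conj (x 1)‖
      ≤ √(‖x 1‖ ^ 2 + ‖x 0‖ ^ 2) *
          √(‖b * x 0 - (a - d) * x 1‖ ^ 2 + ‖(a - d) * conj (x 0) + b * conj (x 1)‖ ^ 2) :=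
        mul_add_mul_le_sqrt_mul_sqrt ..
    _ = √(‖a - d‖ ^ 2 + ‖b‖ ^ 2) := by
        rw [add_comm (‖x 1‖ ^ 2), ← EuclideanSpace.norm_sq_fin_two, hx,
          add_comm (‖b * _ - _‖ ^ 2), norm_sq_conj_add_norm_sq_sub,
          ← EuclideanSpace.norm_sq_fin_two, hx]
        simp

lemma exists_unit_norm_sq_eq_mul_conj_eq {t : ℝ} {w : ℂ} (ht : t ∈ Icc (0 : ℝ) 1)
    (hw : ‖w‖ ^ 2 = t * (1 - t)) :
    ∃ x : EuclideanSpace ℂ (Fin 2), ‖x‖ = 1 ∧ ‖x 0‖ ^ 2 = t ∧ x 0 * conj (x 1) = w := by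
  have h₀ : ‖(√t : ℂ) * exp (arg w * I)‖ ^ 2 = t := by
    rw [norm_mul, norm_exp_ofReal_mul_I, mul_one, norm_real, Real.norm_eq_abs, sq_abs,
      Real.sq_sqrt ht.1]
  have h₁ : ‖(√(1 - t) : ℂ)‖ ^ 2 = 1 - t := by
    rw [norm_real, Real.norm_eq_abs, sq_abs, Real.sq_sqrt (sub_nonneg.2 ht.2)]
  refine ⟨!₂[√t * exp (arg w * I), √(1 - t)], ?_, h₀, ?_⟩
  · rw [EuclideanSpace.norm_eq, Fin.sum_univ_two]
    simp only [Matrix.cons_val_zero, Matrix.cons_val_one]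
    rw [h₀, h₁, add_sub_cancel, Real.sqrt_one]
  · have : √t * √(1 - t) = ‖w‖ := by
      rw [← Real.sqrt_mul ht.1, ← hw, Real.sqrt_sq (norm_nonneg _)]
    simp only [Matrix.cons_val_zero, Matrix.cons_val_one, conj_ofReal]
    rw [mul_right_comm, ← ofReal_mul, this, norm_mul_exp_arg_mul_I]

lemma exists_inner_toEuclideanLin_lowerTriangular_eq (hb : b ≠ 0) {z : ℂ}
    (hz : ‖z - a‖ + ‖z - d‖ ≤ √(‖a - d‖ ^ 2 + ‖b‖ ^ 2)) :
    ∃ x : EuclideanSpace ℂ (Fin 2), ‖x‖ = 1 ∧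
      inner ℂ x (Matrix.toEuclideanLin !![a, 0; b, d] x) = z := by
  have hsq : (‖z - d‖ + ‖z - a‖) ^ 2 ≤ ‖a - d‖ ^ 2 + ‖b‖ ^ 2 := by
    rw [add_comm]
    exact (Real.le_sqrt (by positivity) (by positivity)).1 hz
  obtain ⟨t, ht, hroot⟩ :=
    exists_mem_Icc_sq_mul_one_sub_add_sq_mul_eq (norm_nonneg _) (norm_nonneg _) hsq
  have hv : ‖z - d - t • (a - d)‖ ^ 2 = ‖b‖ ^ 2 * (t * (1 - t)) := by
    rw [norm_sub_smul_sq, sub_sub_sub_cancel_right]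
    linear_combination hroot
  obtain ⟨x, hx, hx₀, hx₀₁⟩ := exists_unit_norm_sq_eq_mul_conj_eq ht
    (w := (z - d - t • (a - d)) / b) (by
      rw [norm_div, div_pow, hv, mul_div_cancel_left₀ _ (by simpa using hb)])
  refine ⟨x, hx, ?_⟩
  have hx₁ : ‖x 1‖ ^ 2 = 1 - t := by
    linarith [EuclideanSpace.norm_sq_fin_two x, show ‖x‖ ^ 2 = 1 by rw [hx, one_pow]]
  rw [inner_toEuclideanLin_lowerTriangular, hx₀₁, mul_div_cancel₀ _ hb, ← ofReal_pow,
    ← ofReal_pow, hx₀, hx₁, real_smul]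
  push_cast
  ring

end LowerTriangular

theorem stmt_19_general (a b d : ℂ) (hb : b ≠ 0) :
    {z : ℂ | ∃ x : EuclideanSpace ℂ (Fin 2), ‖x‖ = 1 ∧
        (inner ℂ x (Matrix.toEuclideanLin !![a, 0; b, d] x) : ℂ) = z} =
      {z : ℂ | ‖z - a‖ + ‖z - d‖ ≤
        Real.sqrt (‖a - d‖ ^ 2 + ‖b‖ ^ 2)} := by
  ext z
  constructor
  · rintro ⟨x, hx, rfl⟩
    exact norm_inner_toEuclideanLin_lowerTriangular_sub_add_le a b d hx
  · exact exists_inner_toEuclideanLin_lowerTriangular_eq a b d hb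

/-- The numerical range of the 2×2 complex matrix `[[a, 0], [b, d]]` with `a ≠ d`, `b ≠ 0`
is the closed elliptical disc with foci `a` and `d` and major axis length
`sqrt(|a-d|² + |b|²)` (hence minor axis length `|b|`):
`{z : |z-a| + |z-d| ≤ sqrt(|a-d|² + |b|²)}`. -/
theorem stmt_19 (a b d : ℂ) (had : a ≠ d) (hb : b ≠ 0) :
    {z : ℂ | ∃ x : EuclideanSpace ℂ (Fin 2), ‖x‖ = 1 ∧
        (inner ℂ x (Matrix.toEuclideanLin !![a, 0; b, d] x) : ℂ) = z} =
      {z : ℂ | ‖z - a‖ + ‖z - d‖ ≤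
        Real.sqrt (‖a - d‖ ^ 2 + ‖b‖ ^ 2)} :=
  stmt_19_general a b d hb
end
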